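/- Let G be a graph on n vertices with independence number α(G) ≤ 2 such that oh(G) < ⌈n/2⌉, and such that every proper induced subgraph G′ of G satisfies oh(G′) ≥ ⌈|G′|/2⌉. Then for every vertex v of G, the set V(G) \ N[v] is a clique, and 2 ≤ n − 1 − d(v) ≤ ω(G) ≤ ⌈n/2⌉ − 1, where d(v) is the degree of v. -/

import Mathlib

/-! Since `α(G) ≤ 2`, any two non-neighbours of `v` are adjacent, so `V \ N[v]` is a clique and
`n - 1 - d(v) ≤ ω(G)`. A clique is an odd minor with singleton branch sets, so
`ω(G) ≤ oh(G) < ⌈n/2⌉`. Finally, a vertex adjacent to all of `s`, coloured with a colour occurring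
in every branch set, extends any odd minor of `G[s]` as a new singleton branch set, hence `oh(G) ≥ oh(G[N(v)]) + 1 ≥ ⌈d(v)/2⌉ + 1` by minimality,
which together with `oh(G) < ⌈n/2⌉` forces `n - 1 - d(v) ≥ 2`. -/

open SimpleGraph

/-- The spanning subgraph of `G` consisting of the edges that are bichromatic
(i.e. whose two endpoints receive different colors) under the 2-coloring `c`. -/
def SimpleGraph.bichromaticSubgraph {V : Type*} (G : SimpleGraph V) (c : V → Bool) :
    SimpleGraph V where
  Adj u v := G.Adj u v ∧ c u ≠ c v
  symm := ⟨fun u v h => ⟨h.1.symm, h.2.symm⟩⟩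
  loopless := ⟨fun v h => h.2 rfl⟩

/-- `G` contains an odd `K t` minor: there are `t` pairwise disjoint nonempty branch sets
and a 2-coloring of the vertices such that each branch set induces a connected subgraph
using only bichromatic edges (so it carries a spanning tree all of whose edges are
bichromatic), and every two branch sets are joined by a monochromatic edge of `G`. -/
def SimpleGraph.HasOddKMinor {V : Type*} (G : SimpleGraph V) (t : ℕ) : Prop :=
  ∃ (c : V → Bool) (B : Fin t → Set V),
    (∀ i, (B i).Nonempty) ∧
    (Pairwise fun i j => Disjoint (B i) (B j)) ∧
    (∀ i, ((G.bichromaticSubgraph c).induce (B i)).Connected) ∧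
    (∀ i j, i ≠ j → ∃ u ∈ B i, ∃ v ∈ B j, G.Adj u v ∧ c u = c v)

/-- `oh G` is the largest `t` such that `G` contains an odd `K t` minor. -/
noncomputable def SimpleGraph.oh {V : Type*} (G : SimpleGraph V) : ℕ :=
  sSup {t | G.HasOddKMinor t}

/-- The independence number of `G`. -/
noncomputable def SimpleGraph.indepNum' {V : Type*} (G : SimpleGraph V) : ℕ :=
  Gᶜ.cliqueNum

/-- The join of two vertex-disjoint graphs: take the disjoint union and add all
edges between the two parts. -/
def SimpleGraph.joinG {α β : Type*} (G : SimpleGraph α) (H : SimpleGraph β) :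
    SimpleGraph (α ⊕ β) where
  Adj u v := match u, v with
    | Sum.inl a, Sum.inl b => G.Adj a b
    | Sum.inr a, Sum.inr b => H.Adj a b
    | _, _ => True
  symm := by constructor; rintro (a | a) (b | b) h <;> first | exact h.symm | trivial
  loopless := by constructor; rintro (a | a) h <;> exact h.ne rfl

namespace SimpleGraph

variable {V W : Type*}

def IsOddExpansion (G : SimpleGraph V) {t : ℕ} (c : V → Bool) (B : Fin t → Set V) : Prop :=
  (∀ i, (B i).Nonempty) ∧
    (Pairwise fun i j => Disjoint (B i) (B j)) ∧
    (∀ i, ((G.bichromaticSubgraph c).induce (B i)).Connected) ∧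
    (∀ i j, i ≠ j → ∃ u ∈ B i, ∃ v ∈ B j, G.Adj u v ∧ c u = c v)

lemma hasOddKMinor_iff {G : SimpleGraph V} {t : ℕ} :
    G.HasOddKMinor t ↔ ∃ (c : V → Bool) (B : Fin t → Set V), G.IsOddExpansion c B :=
  Iff.rfl

lemma hasOddKMinor_zero (G : SimpleGraph V) : G.HasOddKMinor 0 :=
  ⟨fun _ => true, Fin.elim0, fun i => i.elim0, fun i => i.elim0, fun i => i.elim0,
    fun i => i.elim0⟩

lemma HasOddKMinor.le_card [Fintype V] {G : SimpleGraph V} {t : ℕ}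
    (h : G.HasOddKMinor t) : t ≤ Fintype.card V := by
  obtain ⟨-, B, hne, hdisj, -, -⟩ := h
  choose f hf using hne
  have hf_inj : Function.Injective f := fun i j hij => by
    by_contra hne
    exact Set.disjoint_left.1 (hdisj hne) (hf i) (hij ▸ hf j)
  simpa using Fintype.card_le_of_injective f hf_inj

lemma bddAbove_setOf_hasOddKMinor [Fintype V] (G : SimpleGraph V) :
    BddAbove {t | G.HasOddKMinor t} :=
  ⟨Fintype.card V, fun _ => HasOddKMinor.le_card⟩

lemma HasOddKMinor.le_oh [Fintype V] {G : SimpleGraph V} {t : ℕ}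
    (h : G.HasOddKMinor t) : t ≤ G.oh :=
  le_csSup G.bddAbove_setOf_hasOddKMinor h

lemma hasOddKMinor_oh [Fintype V] (G : SimpleGraph V) : G.HasOddKMinor G.oh :=
  Nat.sSup_mem ⟨0, G.hasOddKMinor_zero⟩ G.bddAbove_setOf_hasOddKMinor

lemma IsClique.hasOddKMinor {G : SimpleGraph V} {s : Finset V} (hs : G.IsClique ↑s) :
    G.HasOddKMinor s.card := by
  set e := s.equivFin.symm
  have he : ∀ {i j}, i ≠ j → (e i : V) ≠ e j := fun hij h =>
    hij (e.injective (Subtype.ext h))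
  exact ⟨fun _ => true, fun i => {(e i : V)}, fun _ => Set.singleton_nonempty _,
    fun _ _ hij => Set.disjoint_singleton.2 (he hij), fun _ => .of_subsingleton,
    fun i j hij => ⟨_, rfl, _, rfl, hs (e i).2 (e j).2 (he hij), rfl⟩⟩

lemma cliqueNum_le_oh [Fintype V] (G : SimpleGraph V) : G.cliqueNum ≤ G.oh := by
  obtain ⟨s, hs⟩ := G.exists_isNClique_cliqueNum
  simpa [hs.card_eq] using hs.isClique.hasOddKMinor.le_oh

namespace IsOddExpansion

variable {G : SimpleGraph V} {t : ℕ} {c : V → Bool} {B : Fin t → Set V}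

/-- If some branch set is monochromatic, its colour reaches every other branch set along a
monochromatic edge. -/
lemma exists_color_mem_forall (h : G.IsOddExpansion c B) :
    ∃ b : Bool, ∀ i, ∃ x ∈ B i, c x = b := by
  obtain ⟨hne, -, -, hjoin⟩ := h
  by_cases hmono : ∃ i₀, ∀ x ∈ B i₀, c x = false
  · obtain ⟨i₀, h₀⟩ := hmono
    refine ⟨false, fun i => ?_⟩
    rcases eq_or_ne i i₀ with rfl | hi
    · obtain ⟨x, hx⟩ := hne i
      exact ⟨x, hx, h₀ x hx⟩
    · obtain ⟨u, hu, w, hw, -, hcol⟩ := hjoin i₀ i hi.symm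
      exact ⟨w, hw, hcol ▸ h₀ u hu⟩
  · push Not at hmono
    exact ⟨true, fun i => by simpa using hmono i⟩

lemma map {H : SimpleGraph W} {c : W → Bool} {B : Fin t → Set W}
    (h : H.IsOddExpansion c B) (f : H ↪g G) (c' : V → Bool) (hc : ∀ x, c' (f x) = c x) :
    G.IsOddExpansion c' (fun i => f '' B i) := by
  obtain ⟨hne, hdisj, hconn, hjoin⟩ := h
  refine ⟨fun i => (hne i).image f, fun i j hij =>
    Set.disjoint_image_of_injective f.injective (hdisj hij), fun i => ?_, fun i j hij => ?_⟩
  · let e : (H.bichromaticSubgraph c).induce (B i) ≃g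
        (G.bichromaticSubgraph c').induce (f '' B i) :=
      ⟨Equiv.Set.image f (B i) f.injective, fun {a b} => by
        change G.Adj (f a) (f b) ∧ c' (f a) ≠ c' (f b) ↔ H.Adj a b ∧ c a ≠ c b
        rw [f.map_adj_iff, hc, hc]⟩
    exact e.connected_iff.1 (hconn i)
  · obtain ⟨u, hu, w, hw, huw, hcol⟩ := hjoin i j hij
    exact ⟨f u, Set.mem_image_of_mem f hu, f w, Set.mem_image_of_mem f hw,
      f.map_adj_iff.2 huw, by rw [hc, hc, hcol]⟩

lemma snoc_apex (h : G.IsOddExpansion c B) {v : V} (hv : ∀ i, v ∉ B i)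
    (hadj : ∀ i, ∀ x ∈ B i, G.Adj v x) (hcol : ∀ i, ∃ x ∈ B i, c x = c v) :
    G.IsOddExpansion c (Fin.snoc (α := fun _ => Set V) B {v}) := by
  obtain ⟨hne, hdisj, hconn, hjoin⟩ := h
  refine ⟨fun i => ?_, fun i j hij => ?_, fun i => ?_, fun i j hij => ?_⟩
  · induction i using Fin.lastCases with
    | last => simp
    | cast i => simpa using hne i
  · induction i using Fin.lastCases with
    | last =>
      induction j using Fin.lastCases with
      | last => exact absurd rfl hij
      | cast j => simpa using hv j
    | cast i =>
      induction j using Fin.lastCases with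
      | last => simpa using hv i
      | cast j => simpa using hdisj (fun h => hij (congrArg _ h))
  · induction i using Fin.lastCases with
    | last => rw [Fin.snoc_last]; exact .of_subsingleton
    | cast i => rw [Fin.snoc_castSucc]; exact hconn i
  · induction i using Fin.lastCases with
    | last =>
      induction j using Fin.lastCases with
      | last => exact absurd rfl hij
      | cast j =>
        obtain ⟨x, hx, hxc⟩ := hcol j
        exact ⟨v, by simp, x, by simpa using hx, hadj j x hx, hxc.symm⟩
    | cast i =>
      induction j using Fin.lastCases with
      | last =>
        obtain ⟨x, hx, hxc⟩ := hcol i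
        exact ⟨x, by simpa using hx, v, by simp, (hadj i x hx).symm, hxc⟩
      | cast j => simpa using hjoin i j (fun h => hij (congrArg _ h))

end IsOddExpansion

lemma oh_induce_add_one_le [Fintype V] {G : SimpleGraph V} {v : V} {s : Set V}
    (hv : v ∉ s) (hadj : ∀ x ∈ s, G.Adj v x) : (G.induce s).oh + 1 ≤ G.oh := by
  classical
  obtain ⟨c, B, hB⟩ := hasOddKMinor_iff.1 (G.induce s).hasOddKMinor_oh
  obtain ⟨b, hb⟩ := hB.exists_color_mem_forall
  let c' : V → Bool := fun x => if hx : x ∈ s then c ⟨x, hx⟩ else b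
  have hc' : ∀ x : s, c' x = c x := fun x => dif_pos x.2
  have hcv : c' v = b := dif_neg hv
  have hB' := hB.map (Embedding.induce s) c' hc'
  refine HasOddKMinor.le_oh ⟨c', _, hB'.snoc_apex (v := v) ?_ ?_ ?_⟩
  · rintro i ⟨x, -, rfl⟩
    exact hv x.2
  · rintro i _ ⟨x, -, rfl⟩
    exact hadj x x.2
  · intro i
    obtain ⟨x, hx, hxc⟩ := hb i
    exact ⟨x, Set.mem_image_of_mem _ hx, by rw [hc', hxc, hcv]⟩

lemma isClique_compl_insert_neighborSet [Finite V] (G : SimpleGraph V) (hα : G.indepNum' ≤ 2) (v : V) :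
    G.IsClique (insert v (G.neighborSet v))ᶜ := by
  classical
  intro a ha b hb hab
  by_contra hnadj
  simp only [Set.mem_compl_iff, Set.mem_insert_iff, mem_neighborSet, not_or] at ha hb
  have h3 : Gᶜ.IsNClique 3 {v, a, b} :=
    is3Clique_triple_iff.2 ⟨⟨Ne.symm ha.1, ha.2⟩, ⟨Ne.symm hb.1, hb.2⟩, hab, hnadj⟩
  have := h3.isClique.card_le_cliqueNum
  rw [h3.card_eq] at this
  exact absurd (this.trans hα) (by norm_num)

lemma card_sub_degree_le_cliqueNum [Fintype V] {G : SimpleGraph V} [DecidableRel G.Adj] {v : V}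
    (h : G.IsClique (insert v (G.neighborSet v))ᶜ) :
    Fintype.card V - (G.degree v + 1) ≤ G.cliqueNum := by
  classical
  have hv : v ∉ G.neighborFinset v := by simp
  rw [← Set.coe_toFinset (insert v (G.neighborSet v))ᶜ] at h
  convert h.card_le_cliqueNum using 1
  rw [Set.toFinset_compl, Finset.card_compl, Set.toFinset_insert, ← neighborFinset_def,
    Finset.card_insert_of_notMem hv, card_neighborFinset_eq_degree]

end SimpleGraph

open SimpleGraph in
theorem statement12 {V : Type*} [Fintype V] (G : SimpleGraph V) [DecidableRel G.Adj]
    (hα : G.indepNum' ≤ 2) (hoh : G.oh < (Fintype.card V + 1) / 2)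
    (hmin : ∀ s : Finset V, s ≠ Finset.univ →
      (s.card + 1) / 2 ≤ (G.induce (s : Set V)).oh) :
    ∀ v : V, G.IsClique ((insert v (G.neighborSet v))ᶜ) ∧
      2 ≤ (Fintype.card V : ℤ) - 1 - G.degree v ∧
      (Fintype.card V : ℤ) - 1 - G.degree v ≤ G.cliqueNum ∧
      (G.cliqueNum : ℤ) ≤ (((Fintype.card V + 1) / 2 : ℕ) : ℤ) - 1 := by
  intro v
  have hclique := G.isClique_compl_insert_neighborSet hα v
  have hv : v ∉ G.neighborFinset v := by simp
  have hoh_nbhd : (G.degree v + 1) / 2 + 1 ≤ G.oh := by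
    have h := hmin (G.neighborFinset v) (fun h => hv (h ▸ Finset.mem_univ v))
    rw [card_neighborFinset_eq_degree] at h
    exact (Nat.add_le_add_right h 1).trans
      (oh_induce_add_one_le (v := v) (by simp) (by simp))
  have hdeg := G.degree_lt_card_verts v
  have hω := card_sub_degree_le_cliqueNum hclique
  have := G.cliqueNum_le_oh
  refine ⟨hclique, by omega, by omega, by omega⟩
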